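/- arXiv:2306.12690 — 2 statements merged into one kernel-verified Lean document; each statement's English description precedes it below -/
import Mathlib

section
/- (Clustering with denoised data: exact recovery.) Let X, X̂ ∈ ℝ^{n×d} with ‖X_i‖ ≤ 1 for all i ∈ [n] and max_i ‖X̂_i − X_i‖ ≤ ε. Let C = (C_1,…,C_K) be a partition of [n] with centers m_1,…,m_K ∈ ℝ^d such that: |C_k| ≥ c_0·n for all k; ‖X_i − m_k‖ ≤ δ for all i ∈ C_k; and ‖m_j − m_k‖ ≥ c_m for all j ≠ k. Define f̂(C′, m′) = (1/n)∑_{k∈[K]}∑_{i∈C′_k} ‖X̂_i − m′_k‖², and let (Ĉ, m̂) be a global minimizer of f̂ over all K-partitions of [n] and all centers in ℝ^d. If c_m > 2(δ + ε + 2√(2(δ² + ε²)/c_0)), then the partition Ĉ coincides with C up to a permutation of the cluster labels. -/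
/-!
Comparing the minimizer with the true clustering bounds its cost by `n r²`, where
`r = δ + ε ≥ ‖X̂ᵢ - m_k‖` (i ∈ C_k), and `r² ≤ 2 (δ² + ε²)`. Since every true cluster holds at least
`c₀ n` points, it contains a point within `R = √(r² / c₀)` of its estimated center; hence each
true center `m_k` lies within `r + R` of some estimated center `m̂_{π k}`, and separation makes
`π` a permutation. Finally a minimizer assigns each point to its nearest estimated center, which
the margin `c_m > 2 (r + 2R)` forces to be `m̂_{π k}` for the point's true cluster `k`.
-/

open Finset Function

section Labelings

variable {ι κ : Type*} [Fintype ι] [DecidableEq κ]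

lemma exists_eq_fiber_of_existsUnique_mem {C : κ → Finset ι} (hC : ∀ i, ∃! k, i ∈ C k) :
    ∃ σ : ι → κ, C = fun k => ({i | σ i = k} : Finset ι) := by
  choose σ hσ hσ_unique using hC
  refine ⟨σ, funext fun k => ext fun i => ?_⟩
  rw [mem_filter_univ]
  exact ⟨fun hi => (hσ_unique i k hi).symm, fun hi => hi ▸ hσ i⟩

lemma existsUnique_mem_fiber (σ : ι → κ) (i : ι) : ∃! k, i ∈ ({j | σ j = k} : Finset ι) :=
  ⟨σ i, by simp, fun k hk => by simpa [eq_comm] using hk⟩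

lemma sum_sum_fiber [Fintype κ] {M : Type*} [AddCommMonoid M] (σ : ι → κ) (f : ι → κ → M) :
    ∑ k, ∑ i ∈ {j | σ j = k}, f i k = ∑ i, f i (σ i) := by
  rw [← sum_fiberwise univ σ (fun i => f i (σ i))]
  exact sum_congr rfl fun k _ => sum_congr rfl fun i hi => by rw [(mem_filter.1 hi).2]

omit [DecidableEq κ] in
lemma apply_le_of_forall_sum_le {φ : ι → κ → ℝ} {σ : ι → κ}
    (hσ : ∀ σ' : ι → κ, ∑ i, φ i (σ i) ≤ ∑ i, φ i (σ' i)) (i : ι) (a : κ) :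
    φ i (σ i) ≤ φ i a := by
  classical
  have h := hσ (update σ i a)
  have hrest : ∑ j ∈ univ.erase i, φ j (update σ i a j) = ∑ j ∈ univ.erase i, φ j (σ j) :=
    sum_congr rfl fun j hj => by rw [update_of_ne (ne_of_mem_erase hj)]
  rw [← add_sum_erase _ _ (mem_univ i), ← add_sum_erase _ _ (mem_univ i), hrest,
    update_self] at h
  exact le_of_add_le_add_right h

end Labelings

section Separation

variable {κ κ' E : Type*} [SeminormedAddCommGroup E] {m : κ → E} {c : κ' → E} {π : κ → κ'}
  {r ρ cm : ℝ}

lemma injective_of_norm_sub_le (hsep : ∀ j k, j ≠ k → cm ≤ ‖m j - m k‖)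
    (hπ : ∀ k, ‖m k - c (π k)‖ ≤ ρ) (hρ : 2 * ρ < cm) : Injective π := by
  intro j k hjk
  by_contra hne
  have : ‖m j - m k‖ ≤ 2 * ρ := calc
    ‖m j - m k‖ ≤ ‖m j - c (π j)‖ + ‖c (π k) - m k‖ := by
      rw [hjk]; exact norm_sub_le_norm_sub_add_norm_sub _ _ _
    _ ≤ 2 * ρ := by rw [norm_sub_rev (c _)]; linarith [hπ j, hπ k]
  linarith [hsep j k hne]

lemma eq_of_forall_norm_sub_le (hsep : ∀ j k, j ≠ k → cm ≤ ‖m j - m k‖)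
    (hπ : ∀ k, ‖m k - c (π k)‖ ≤ ρ) (hπ_surj : Surjective π) (hgap : 2 * (r + ρ) < cm)
    {x : E} {k : κ} {j : κ'} (hx : ‖x - m k‖ ≤ r) (hj : ∀ j', ‖x - c j‖ ≤ ‖x - c j'‖) :
    j = π k := by
  obtain ⟨k', rfl⟩ := hπ_surj j
  by_contra hne
  have hk : k' ≠ k := fun h => hne (h ▸ rfl)
  have hxc : ‖x - c (π k)‖ ≤ r + ρ := calc
    ‖x - c (π k)‖ ≤ ‖x - m k‖ + ‖m k - c (π k)‖ := norm_sub_le_norm_sub_add_norm_sub _ _ _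
    _ ≤ r + ρ := add_le_add hx (hπ k)
  have : ‖m k' - m k‖ ≤ 2 * (r + ρ) := calc
    ‖m k' - m k‖ ≤ ‖m k' - c (π k')‖ + ‖c (π k') - x‖ + ‖x - m k‖ := by
      grw [norm_sub_le_norm_sub_add_norm_sub (m k') (c (π k')),
        norm_sub_le_norm_sub_add_norm_sub (c (π k')) x, add_assoc]
    _ ≤ ρ + (r + ρ) + r := by
      rw [norm_sub_rev (c _)]
      gcongr
      · exact hπ k'
      · exact (hj _).trans hxc
    _ = 2 * (r + ρ) := by ring
  linarith [hsep k' k hk]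

end Separation

section KMeans

variable {ι κ E : Type*} [Fintype ι] [SeminormedAddCommGroup E]

def kmeansCost (x : ι → E) (σ : ι → κ) (c : κ → E) : ℝ :=
  ∑ i, ‖x i - c (σ i)‖ ^ 2

variable {x : ι → E} {σ : ι → κ} {c : κ → E} {r : ℝ}

lemma kmeansCost_le_card_mul_sq (h : ∀ i, ‖x i - c (σ i)‖ ≤ r) :
    kmeansCost x σ c ≤ Fintype.card ι * r ^ 2 := by
  calc kmeansCost x σ c ≤ ∑ _i : ι, r ^ 2 :=
        sum_le_sum fun i _ => pow_le_pow_left₀ (norm_nonneg _) (h i) 2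
    _ = Fintype.card ι * r ^ 2 := by rw [sum_const, card_univ, nsmul_eq_mul]

-- Markov's inequality on `s`, with the bound on the total cost as the first moment.
lemma exists_mem_norm_sub_le_sqrt {s : Finset ι} {c₀ : ℝ} (hc₀ : 0 < c₀) (hs : s.Nonempty)
    (hsize : c₀ * Fintype.card ι ≤ #s) (hcost : kmeansCost x σ c ≤ Fintype.card ι * r ^ 2) :
    ∃ i ∈ s, ‖x i - c (σ i)‖ ≤ √(r ^ 2 / c₀) := by
  have hsum : ∑ i ∈ s, ‖x i - c (σ i)‖ ^ 2 ≤ ∑ _i ∈ s, r ^ 2 / c₀ := calc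
    ∑ i ∈ s, ‖x i - c (σ i)‖ ^ 2 ≤ kmeansCost x σ c :=
      sum_le_sum_of_subset_of_nonneg (subset_univ s) fun _ _ _ => by positivity
    _ ≤ c₀ * Fintype.card ι * (r ^ 2 / c₀) := by
      rwa [mul_comm c₀, mul_assoc, mul_div_cancel₀ _ hc₀.ne']
    _ ≤ ∑ _i ∈ s, r ^ 2 / c₀ := by rw [sum_const, nsmul_eq_mul]; gcongr
  obtain ⟨i, hi, hle⟩ := exists_le_of_sum_le hs hsum
  exact ⟨i, hi, Real.le_sqrt_of_sq_le hle⟩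

lemma norm_sub_le_of_forall_kmeansCost_le (hσ : ∀ σ', kmeansCost x σ c ≤ kmeansCost x σ' c)
    (i : ι) (k : κ) : ‖x i - c (σ i)‖ ≤ ‖x i - c k‖ :=
  (sq_le_sq₀ (norm_nonneg _) (norm_nonneg _)).1 <|
    apply_le_of_forall_sum_le (φ := fun i k => ‖x i - c k‖ ^ 2) hσ i k

end KMeans

section Recovery

variable {ι κ E : Type*} [Fintype ι] [Nonempty ι] [Fintype κ] [DecidableEq κ]
  [SeminormedAddCommGroup E]

theorem exists_perm_comp_eq_of_forall_kmeansCost_le {x : ι → E} {τ σ : ι → κ} {m c : κ → E}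
    {r c₀ cm : ℝ} (hc₀ : 0 < c₀) (hclose : ∀ i, ‖x i - m (τ i)‖ ≤ r)
    (hsize : ∀ k, c₀ * Fintype.card ι ≤ #{i | τ i = k})
    (hsep : ∀ j k, j ≠ k → cm ≤ ‖m j - m k‖)
    (hmin : ∀ (σ' : ι → κ) c', kmeansCost x σ c ≤ kmeansCost x σ' c')
    (hgap : 2 * (r + 2 * √(r ^ 2 / c₀)) < cm) :
    ∃ π : Equiv.Perm κ, ∀ i, σ i = π (τ i) := by
  set R := √(r ^ 2 / c₀)
  have hn : (0 : ℝ) < Fintype.card ι := Nat.cast_pos.2 Fintype.card_pos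
  have hc₀_le : c₀ ≤ 1 := by
    obtain ⟨i⟩ := ‹Nonempty ι›
    have : (#{j | τ j = τ i} : ℝ) ≤ Fintype.card ι := by exact_mod_cast card_le_univ _
    nlinarith [hsize (τ i)]
  have hrR : r ≤ R := calc
    r ≤ √(r ^ 2) := by rw [Real.sqrt_sq_eq_abs]; exact le_abs_self r
    _ ≤ R := Real.sqrt_le_sqrt (le_div_self (sq_nonneg r) hc₀ hc₀_le)
  have hcost := (hmin τ m).trans (kmeansCost_le_card_mul_sq hclose)
  have hfit : ∀ k, ∃ i ∈ ({i | τ i = k} : Finset ι), ‖x i - c (σ i)‖ ≤ R := fun k =>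
    exists_mem_norm_sub_le_sqrt hc₀
      (card_pos.1 (by exact_mod_cast (mul_pos hc₀ hn).trans_le (hsize k))) (hsize k) hcost
  choose p hp_mem hp using hfit
  set π₀ : κ → κ := fun k => σ (p k)
  have hπ₀ : ∀ k, ‖m k - c (π₀ k)‖ ≤ r + R := fun k => calc
    ‖m k - c (π₀ k)‖ ≤ ‖x (p k) - m k‖ + ‖x (p k) - c (σ (p k))‖ := by
      rw [norm_sub_rev (x _)]; exact norm_sub_le_norm_sub_add_norm_sub _ _ _
    _ ≤ r + R :=
      add_le_add (by simpa [(mem_filter_univ _).1 (hp_mem k)] using hclose (p k)) (hp k)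
  have hbij : Bijective π₀ := Finite.injective_iff_bijective.1 <|
    injective_of_norm_sub_le hsep hπ₀ (by linarith [Real.sqrt_nonneg (r ^ 2 / c₀)])
  exact ⟨Equiv.ofBijective π₀ hbij, fun i => eq_of_forall_norm_sub_le hsep hπ₀ hbij.2
    (by linarith) (hclose i) (norm_sub_le_of_forall_kmeansCost_le (fun σ' => hmin σ' c) i)⟩

end Recovery

theorem kmeans_denoised_exact_recovery_general (n d K : ℕ) (ε δ c₀ cm : ℝ)
    (hc₀ : 0 < c₀)
    (X Xh : Fin n → EuclideanSpace ℝ (Fin d))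
    (hXh : ∀ i, ‖Xh i - X i‖ ≤ ε)
    (C : Fin K → Finset (Fin n)) (m : Fin K → EuclideanSpace ℝ (Fin d))
    (hpart : ∀ i : Fin n, ∃! k, i ∈ C k)
    (hsize : ∀ k, c₀ * n ≤ ((C k).card : ℝ))
    (hclose : ∀ k, ∀ i ∈ C k, ‖X i - m k‖ ≤ δ)
    (hsep : ∀ j k : Fin K, j ≠ k → cm ≤ ‖m j - m k‖)
    (Ch : Fin K → Finset (Fin n)) (mh : Fin K → EuclideanSpace ℝ (Fin d))
    (hChpart : ∀ i : Fin n, ∃! k, i ∈ Ch k)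
    (hmin : ∀ (C' : Fin K → Finset (Fin n)) (m' : Fin K → EuclideanSpace ℝ (Fin d)),
      (∀ i : Fin n, ∃! k, i ∈ C' k) →
      (1 / n : ℝ) * ∑ k, ∑ i ∈ Ch k, ‖Xh i - mh k‖ ^ 2 ≤
        (1 / n : ℝ) * ∑ k, ∑ i ∈ C' k, ‖Xh i - m' k‖ ^ 2)
    (hgap : 2 * (δ + ε + 2 * Real.sqrt (2 * (δ ^ 2 + ε ^ 2) / c₀)) < cm) :
    ∃ π : Equiv.Perm (Fin K), ∀ k, Ch (π k) = C k := by
  rcases Nat.eq_zero_or_pos n with rfl | hn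
  · exact ⟨1, fun k => Subsingleton.elim _ _⟩
  have : Nonempty (Fin n) := ⟨⟨0, hn⟩⟩
  obtain ⟨τ, rfl⟩ := exists_eq_fiber_of_existsUnique_mem hpart
  obtain ⟨σ, rfl⟩ := exists_eq_fiber_of_existsUnique_mem hChpart
  have hclose_denoised (i : Fin n) : ‖Xh i - m (τ i)‖ ≤ δ + ε := by
    grw [norm_sub_le_norm_sub_add_norm_sub (Xh i) (X i), hXh i, hclose (τ i) i (by simp)]
    linarith
  have hmin_labeling (σ' : Fin n → Fin K) (c' : Fin K → EuclideanSpace ℝ (Fin d)) :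
      kmeansCost Xh σ mh ≤ kmeansCost Xh σ' c' := by
    have h := hmin _ c' (existsUnique_mem_fiber σ')
    rw [sum_sum_fiber σ fun i k => ‖Xh i - mh k‖ ^ 2,
      sum_sum_fiber σ' fun i k => ‖Xh i - c' k‖ ^ 2] at h
    exact le_of_mul_le_mul_left h (by positivity)
  have hgap_sq : 2 * (δ + ε + 2 * √((δ + ε) ^ 2 / c₀)) < cm := by
    refine lt_of_le_of_lt ?_ hgap
    gcongr
    nlinarith [sq_nonneg (δ - ε)]
  obtain ⟨π, hπ⟩ := exists_perm_comp_eq_of_forall_kmeansCost_le hc₀ hclose_denoised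
    (fun k => by simpa using hsize k) hsep hmin_labeling hgap_sq
  exact ⟨π, fun k => by ext i; simp [hπ]⟩

/-- Proposition (clustering with denoised data: exact recovery).  Under the cluster-size,
within-cluster radius and center-separation assumptions, if
`c_m > 2(δ + ε + 2√(2(δ² + ε²)/c₀))` then any global minimizer `(Ĉ, m̂)` of the `k`-means
loss built from the denoised data recovers the true partition up to a permutation of the
cluster labels. -/
theorem kmeans_denoised_exact_recovery (n d K : ℕ) (ε δ c₀ cm : ℝ)
    (hε0 : 0 ≤ ε) (hδ0 : 0 < δ) (hc₀ : 0 < c₀) (hcm : 0 < cm)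
    (X Xh : Fin n → EuclideanSpace ℝ (Fin d))
    (hX : ∀ i, ‖X i‖ ≤ 1) (hXh : ∀ i, ‖Xh i - X i‖ ≤ ε)
    (C : Fin K → Finset (Fin n)) (m : Fin K → EuclideanSpace ℝ (Fin d))
    (hpart : ∀ i : Fin n, ∃! k, i ∈ C k)
    (hsize : ∀ k, c₀ * n ≤ ((C k).card : ℝ))
    (hclose : ∀ k, ∀ i ∈ C k, ‖X i - m k‖ ≤ δ)
    (hsep : ∀ j k : Fin K, j ≠ k → cm ≤ ‖m j - m k‖)
    (Ch : Fin K → Finset (Fin n)) (mh : Fin K → EuclideanSpace ℝ (Fin d))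
    (hChpart : ∀ i : Fin n, ∃! k, i ∈ Ch k)
    (hmin : ∀ (C' : Fin K → Finset (Fin n)) (m' : Fin K → EuclideanSpace ℝ (Fin d)),
      (∀ i : Fin n, ∃! k, i ∈ C' k) →
      (1 / n : ℝ) * ∑ k, ∑ i ∈ Ch k, ‖Xh i - mh k‖ ^ 2 ≤
        (1 / n : ℝ) * ∑ k, ∑ i ∈ C' k, ‖Xh i - m' k‖ ^ 2)
    (hgap : 2 * (δ + ε + 2 * Real.sqrt (2 * (δ ^ 2 + ε ^ 2) / c₀)) < cm) :
    ∃ π : Equiv.Perm (Fin K), ∀ k, Ch (π k) = C k :=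
  kmeans_denoised_exact_recovery_general n d K ε δ c₀ cm hc₀ X Xh hXh C m hpart hsize hclose hsep Ch
    mh hChpart hmin hgap
end

section
/- (Graphical Laplacian eigenvalue stability.) Let k : ℝ^d × ℝ^d → ℝ be symmetric and L₀-Lipschitz in each argument, and satisfy 1/K ≤ k(x,y) ≤ K whenever ‖x‖, ‖y‖ ≤ 2, for constants K ≥ 1, L₀ > 0. Let X_1,…,X_n ∈ ℝ^d with ‖X_i‖ ≤ 1 and X̂_1,…,X̂_n ∈ ℝ^d with ‖X̂_i − X_i‖ ≤ ε ≤ 1 for all i. Define A_{ij} = k(X_i, X_j), D = diag(∑_j A_{ij}), L = I − D^{−1/2}AD^{−1/2}, and analogously Â, D̂, L̂ from X̂_1,…,X̂_n. Let λ_1(L) ≥ … ≥ λ_n(L) and λ_1(L̂) ≥ … ≥ λ_n(L̂) be the eigenvalues of the symmetric matrices L and L̂. Then there is a constant C depending only on K and L₀ such that |λ_i(L̂) − λ_i(L)| ≤ C·ε for every i ∈ [n]. -/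
/-!
Every entry of `L̂ - L` is `O(ε / n)`: the kernel values move by at most `2 L₀ ε`, the degrees
lie in `[n / K, n K]` and move by `O(n ε)`, and `a / √(d d')` is Lipschitz on that range. An
`n × n` matrix with entries of size `c / n` has quadratic form at most `c ‖x‖²`, because
`(∑ |xᵢ|)² ≤ n ‖x‖²`. Weyl's inequality then moves each ordered eigenvalue by at most `c`. It
follows from the Courant–Fischer dimension count: the top `i + 1` eigenvectors of one operator
and the bottom `n - i` of the other span subspaces that must meet.
-/

/-- The `k`-th largest value (1-indexed) among `f 0, …, f (m-1)`. -/
noncomputable def kthLargest {m : ℕ} (f : Fin m → ℝ) (k : ℕ) : ℝ :=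
  ((Finset.univ.val.map f).sort (· ≥ ·)).getD (k - 1) 0

/-- The `k`-th largest eigenvalue (1-indexed) of a symmetric real matrix (junk value `0`
if the matrix is not symmetric). -/
noncomputable def symEig {n : ℕ} (S : Matrix (Fin n) (Fin n) ℝ) (k : ℕ) : ℝ :=
  if h : S.IsHermitian then kthLargest h.eigenvalues k else 0

/-- The normalized graph Laplacian `L = I − D^{−1/2} A D^{−1/2}` built from data points
`X_1, …, X_n` and a kernel `k`, where `A_{ij} = k(X_i, X_j)` and `D_{ii} = ∑_j A_{ij}`. -/
noncomputable def lapMat {n d : ℕ} (k : EuclideanSpace ℝ (Fin d) → EuclideanSpace ℝ (Fin d) → ℝ)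
    (X : Fin n → EuclideanSpace ℝ (Fin d)) : Matrix (Fin n) (Fin n) ℝ :=
  fun i j => (if i = j then (1 : ℝ) else 0) -
    k (X i) (X j) /
      (Real.sqrt (∑ l, k (X i) (X l)) * Real.sqrt (∑ l, k (X j) (X l)))

open Finset Module Submodule Matrix
open scoped InnerProductSpace

theorem OrthonormalBasis.repr_eq_zero_of_mem_span_image {ι 𝕜 E : Type*} [Fintype ι] [RCLike 𝕜]
    [NormedAddCommGroup E] [InnerProductSpace 𝕜 E] (b : OrthonormalBasis ι 𝕜 E) {s : Set ι}
    {x : E} (hx : x ∈ span 𝕜 (b '' s)) {i : ι} (hi : i ∉ s) : b.repr x i = 0 := by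
  rw [← b.coe_toBasis, Basis.mem_span_image] at hx
  simpa [b.coe_toBasis_repr_apply] using fun h => hi (hx h)

theorem OrthonormalBasis.finrank_span_image {ι 𝕜 E : Type*} [Fintype ι] [RCLike 𝕜]
    [NormedAddCommGroup E] [InnerProductSpace 𝕜 E] (b : OrthonormalBasis ι 𝕜 E) (s : Finset ι) :
    finrank 𝕜 (span 𝕜 (b '' s)) = s.card := by
  rw [Set.image_eq_range]
  exact (finrank_span_eq_card (b.orthonormal.linearIndependent.comp _ Subtype.val_injective)).trans
    (by simp)

theorem Submodule.exists_ne_zero_mem_of_finrank_lt {K V : Type*} [DivisionRing K] [AddCommGroup V]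
    [Module K V] [FiniteDimensional K V] {s t : Submodule K V}
    (h : finrank K V < finrank K s + finrank K t) : ∃ x ∈ s, x ∈ t ∧ x ≠ 0 := by
  by_contra! hst
  exact h.not_ge (finrank_add_finrank_le_of_disjoint (disjoint_def.mpr hst))

namespace LinearMap.IsSymmetric

variable {𝕜 E : Type*} [RCLike 𝕜] [NormedAddCommGroup E] [InnerProductSpace 𝕜 E]
  [FiniteDimensional 𝕜 E] {T S : E →ₗ[𝕜] E} {n : ℕ}

theorem re_inner_self_apply_eq_sum (hT : T.IsSymmetric) (hn : finrank 𝕜 E = n) (x : E) :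
    RCLike.re ⟪x, T x⟫_𝕜 =
      ∑ i, hT.eigenvalues hn i * ‖(hT.eigenvectorBasis hn).repr x i‖ ^ 2 := by
  rw [← (hT.eigenvectorBasis hn).repr.inner_map_map, PiLp.inner_apply, map_sum]
  refine sum_congr rfl fun i _ => ?_
  rw [eigenvectorBasis_apply_self_apply, RCLike.inner_apply, mul_assoc, RCLike.mul_conj]
  norm_cast

theorem mul_norm_sq_le_re_inner_of_mem_span (hT : T.IsSymmetric) (hn : finrank 𝕜 E = n)
    {s : Set (Fin n)} {c : ℝ} (hc : ∀ i ∈ s, c ≤ hT.eigenvalues hn i)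
    {x : E} (hx : x ∈ span 𝕜 (hT.eigenvectorBasis hn '' s)) :
    c * ‖x‖ ^ 2 ≤ RCLike.re ⟪x, T x⟫_𝕜 := by
  rw [re_inner_self_apply_eq_sum, ← (hT.eigenvectorBasis hn).repr.norm_map,
    EuclideanSpace.norm_sq_eq, mul_sum]
  refine sum_le_sum fun i _ => ?_
  by_cases hi : i ∈ s
  · exact mul_le_mul_of_nonneg_right (hc i hi) (sq_nonneg _)
  · simp [(hT.eigenvectorBasis hn).repr_eq_zero_of_mem_span_image hx hi]

theorem re_inner_le_mul_norm_sq_of_mem_span (hT : T.IsSymmetric) (hn : finrank 𝕜 E = n)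
    {s : Set (Fin n)} {c : ℝ} (hc : ∀ i ∈ s, hT.eigenvalues hn i ≤ c)
    {x : E} (hx : x ∈ span 𝕜 (hT.eigenvectorBasis hn '' s)) :
    RCLike.re ⟪x, T x⟫_𝕜 ≤ c * ‖x‖ ^ 2 := by
  rw [re_inner_self_apply_eq_sum, ← (hT.eigenvectorBasis hn).repr.norm_map,
    EuclideanSpace.norm_sq_eq, mul_sum]
  refine sum_le_sum fun i _ => ?_
  by_cases hi : i ∈ s
  · exact mul_le_mul_of_nonneg_right (hc i hi) (sq_nonneg _)
  · simp [(hT.eigenvectorBasis hn).repr_eq_zero_of_mem_span_image hx hi]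

theorem eigenvalues_le_eigenvalues_add (hT : T.IsSymmetric) (hS : S.IsSymmetric)
    (hn : finrank 𝕜 E = n) {t : ℝ}
    (hTS : ∀ x, RCLike.re ⟪x, T x⟫_𝕜 ≤ RCLike.re ⟪x, S x⟫_𝕜 + t * ‖x‖ ^ 2) (i : Fin n) :
    hT.eigenvalues hn i ≤ hS.eigenvalues hn i + t := by
  obtain ⟨x, hxT, hxS, hx⟩ := exists_ne_zero_mem_of_finrank_lt
    (s := span 𝕜 (hT.eigenvectorBasis hn '' ↑(Iic i)))
    (t := span 𝕜 (hS.eigenvectorBasis hn '' ↑(Ici i))) (by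
      simp only [OrthonormalBasis.finrank_span_image, Fin.card_Iic, Fin.card_Ici]
      omega)
  have hlow := hT.mul_norm_sq_le_re_inner_of_mem_span hn
    (fun j hj => hT.eigenvalues_antitone hn (mem_Iic.mp hj)) hxT
  have hup := hS.re_inner_le_mul_norm_sq_of_mem_span hn
    (fun j hj => hS.eigenvalues_antitone hn (mem_Ici.mp hj)) hxS
  refine le_of_mul_le_mul_right ?_ (by positivity : 0 < ‖x‖ ^ 2)
  calc hT.eigenvalues hn i * ‖x‖ ^ 2 ≤ RCLike.re ⟪x, T x⟫_𝕜 := hlow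
    _ ≤ RCLike.re ⟪x, S x⟫_𝕜 + t * ‖x‖ ^ 2 := hTS x
    _ ≤ (hS.eigenvalues hn i + t) * ‖x‖ ^ 2 := by linarith

end LinearMap.IsSymmetric

theorem kthLargest_comp_equiv {m m' : ℕ} (f : Fin m → ℝ) (e : Fin m' ≃ Fin m) (k : ℕ) :
    kthLargest (f ∘ e) k = kthLargest f k := by
  rw [kthLargest, kthLargest, ← Multiset.map_map, Multiset.map_univ_val_equiv]

theorem kthLargest_succ_of_antitone {m : ℕ} {f : Fin m → ℝ} (hf : Antitone f) {k : ℕ}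
    (hk : k < m) : kthLargest f (k + 1) = f ⟨k, hk⟩ := by
  have hsort : (univ.val.map f).sort (· ≥ ·) = List.ofFn f := by
    rw [Fin.univ_val_map, Multiset.coe_sort]
    refine List.mergeSort_of_pairwise (List.pairwise_ofFn.mpr fun i j hij => ?_)
    simpa using hf hij.le
  rw [kthLargest, hsort, Nat.add_sub_cancel, List.getD_eq_getElem?_getD]
  simp [hk]

/-- `hA.eigenvalues` is `hA.eigenvalues₀` reindexed along an arbitrary equivalence
`Fin n ≃ Fin (Fintype.card (Fin n))`, so only `eigenvalues₀` is known to be sorted. -/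
theorem Matrix.IsHermitian.symEig_succ {n : ℕ} {A : Matrix (Fin n) (Fin n) ℝ}
    (hA : A.IsHermitian) {k : ℕ} (hk : k < Fintype.card (Fin n)) :
    symEig A (k + 1) = hA.eigenvalues₀ ⟨k, hk⟩ := by
  rw [symEig, dif_pos hA]
  change kthLargest (hA.eigenvalues₀ ∘ _) _ = _
  rw [kthLargest_comp_equiv, kthLargest_succ_of_antitone hA.eigenvalues₀_antitone]

theorem Matrix.inner_toEuclideanLin_self_le_of_abs_le {ι : Type*} [Fintype ι] [DecidableEq ι]
    {M : Matrix ι ι ℝ} {c : ℝ} (hM : ∀ i j, |M i j| ≤ c) (x : EuclideanSpace ℝ ι) :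
    ⟪x, M.toEuclideanLin x⟫_ℝ ≤ c * Fintype.card ι * ‖x‖ ^ 2 := by
  rcases isEmpty_or_nonempty ι with hι | ⟨⟨i₀⟩⟩
  · simp [Subsingleton.elim x 0]
  have hc : 0 ≤ c := (abs_nonneg _).trans (hM i₀ i₀)
  have hexpand : ⟪x, M.toEuclideanLin x⟫_ℝ = ∑ i, ∑ j, M i j * (x i * x j) := by
    simp only [EuclideanSpace.inner_eq_star_dotProduct, toLpLin_apply, dotProduct, mulVec,
      sum_mul]
    simp [mul_comm, mul_left_comm]
  calc ⟪x, M.toEuclideanLin x⟫_ℝ = ∑ i, ∑ j, M i j * (x i * x j) := hexpand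
    _ ≤ ∑ i, ∑ j, c * (|x i| * |x j|) := by
      refine sum_le_sum fun i _ => sum_le_sum fun j _ => ?_
      calc M i j * (x i * x j) ≤ |M i j| * (|x i| * |x j|) := by
            rw [← abs_mul, ← abs_mul]; exact le_abs_self _
        _ ≤ c * (|x i| * |x j|) := by gcongr; exact hM i j
    _ = c * (∑ i, |x i|) ^ 2 := by rw [sq, sum_mul_sum, mul_sum]; simp [mul_sum]
    _ ≤ c * (Fintype.card ι * ∑ i, |x i| ^ 2) := by
      gcongr; exact sq_sum_le_card_mul_sum_sq
    _ = c * Fintype.card ι * ‖x‖ ^ 2 := by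
      rw [EuclideanSpace.norm_sq_eq]; simp [mul_assoc]

theorem Matrix.IsHermitian.symEig_le_symEig_add {n : ℕ} {A B : Matrix (Fin n) (Fin n) ℝ}
    (hA : A.IsHermitian) (hB : B.IsHermitian) {c : ℝ} (hAB : ∀ i j, |A i j - B i j| ≤ c)
    {k : ℕ} (hk : 1 ≤ k) (hkn : k ≤ n) : symEig A k ≤ symEig B k + c * n := by
  obtain ⟨k, rfl⟩ := Nat.exists_eq_add_of_le' hk
  have hk' : k < Fintype.card (Fin n) := by simpa using hkn
  rw [hA.symEig_succ hk', hB.symEig_succ hk']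
  refine LinearMap.IsSymmetric.eigenvalues_le_eigenvalues_add _ _ _ (fun x => ?_) _
  have h := inner_toEuclideanLin_self_le_of_abs_le (M := A - B) hAB x
  simp only [map_sub, LinearMap.sub_apply, inner_sub_right, Fintype.card_fin] at h
  simp only [RCLike.re_to_real]
  linarith

theorem Matrix.IsHermitian.abs_symEig_sub_symEig_le {n : ℕ} {A B : Matrix (Fin n) (Fin n) ℝ}
    (hA : A.IsHermitian) (hB : B.IsHermitian) {c : ℝ} (hAB : ∀ i j, |A i j - B i j| ≤ c)
    {k : ℕ} (hk : 1 ≤ k) (hkn : k ≤ n) : |symEig A k - symEig B k| ≤ c * n := by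
  have hBA : ∀ i j, |B i j - A i j| ≤ c := fun i j => abs_sub_comm (A i j) (B i j) ▸ hAB i j
  rw [abs_sub_le_iff]
  constructor
  · linarith [hA.symEig_le_symEig_add hB hAB hk hkn]
  · linarith [hB.symEig_le_symEig_add hA hBA hk hkn]

theorem abs_sqrt_sub_sqrt_le {x y m : ℝ} (hm : 0 < m) (hx : m ^ 2 ≤ x) (hy : m ^ 2 ≤ y) :
    |√x - √y| ≤ |x - y| / (2 * m) := by
  have hmx : m ≤ √x := Real.le_sqrt_of_sq_le hx
  have hmy : m ≤ √y := Real.le_sqrt_of_sq_le hy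
  have hxy : x - y = (√x - √y) * (√x + √y) := by
    rw [mul_comm, ← sq_sub_sq, Real.sq_sqrt (by nlinarith), Real.sq_sqrt (by nlinarith)]
  rw [le_div_iff₀ (by positivity), hxy, abs_mul, abs_of_pos (a := √x + √y) (by linarith)]
  gcongr
  linarith

theorem abs_mul_sub_mul_le (a b c d : ℝ) : |a * b - c * d| ≤ |a| * |b - d| + |d| * |a - c| := by
  calc |a * b - c * d| = |a * (b - d) + d * (a - c)| := by ring_nf
    _ ≤ |a * (b - d)| + |d * (a - c)| := abs_add_le _ _
    _ = |a| * |b - d| + |d| * |a - c| := by rw [abs_mul, abs_mul]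

theorem abs_div_sub_div_le {a b p q : ℝ} (hp : 0 < p) (hq : 0 < q) :
    |b / p - a / q| ≤ (|b - a| * q + |a| * |q - p|) / (p * q) := by
  rw [div_sub_div _ _ hp.ne' hq.ne', abs_div, abs_of_pos (mul_pos hp hq)]
  gcongr
  calc |b * q - p * a| = |(b - a) * q + a * (q - p)| := by ring_nf
    _ ≤ |(b - a) * q| + |a * (q - p)| := abs_add_le _ _
    _ = |b - a| * q + |a| * |q - p| := by rw [abs_mul, abs_mul, abs_of_pos hq]

theorem sq_le_mul_and_mul_le_sq {x y a b : ℝ} (ha : 0 ≤ a) (hx : a ≤ x ∧ x ≤ b)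
    (hy : a ≤ y ∧ y ≤ b) : a ^ 2 ≤ x * y ∧ x * y ≤ b ^ 2 := by
  rw [sq, sq]
  exact ⟨mul_le_mul hx.1 hy.1 ha (ha.trans hx.1),
    mul_le_mul hx.2 hy.2 (ha.trans hy.1) (ha.trans (hx.1.trans hx.2))⟩

theorem abs_sqrt_mul_sub_sqrt_mul_le {x y x' y' m K δ : ℝ} (hm : 0 < m) (hK : 0 < K)
    (hx : m / K ≤ x ∧ x ≤ m * K) (hy : m / K ≤ y ∧ y ≤ m * K)
    (hx' : m / K ≤ x' ∧ x' ≤ m * K) (hy' : m / K ≤ y' ∧ y' ≤ m * K)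
    (hxx' : |x' - x| ≤ m * δ) (hyy' : |y' - y| ≤ m * δ) :
    |√(x * y) - √(x' * y')| ≤ m * K ^ 2 * δ := by
  have hmK : 0 < m / K := by positivity
  have hprod : |x * y - x' * y'| ≤ 2 * m ^ 2 * K * δ := by
    calc |x * y - x' * y'| ≤ |x| * |y - y'| + |y'| * |x - x'| := abs_mul_sub_mul_le _ _ _ _
      _ ≤ m * K * (m * δ) + m * K * (m * δ) := by
        rw [abs_sub_comm y, abs_sub_comm x, abs_of_pos (hmK.trans_le hx.1),
          abs_of_pos (hmK.trans_le hy'.1)]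
        exact add_le_add (mul_le_mul hx.2 hyy' (abs_nonneg _) (by positivity))
          (mul_le_mul hy'.2 hxx' (abs_nonneg _) (by positivity))
      _ = 2 * m ^ 2 * K * δ := by ring
  calc |√(x * y) - √(x' * y')| ≤ |x * y - x' * y'| / (2 * (m / K)) :=
        abs_sqrt_sub_sqrt_le hmK (sq_le_mul_and_mul_le_sq hmK.le hx hy).1
          (sq_le_mul_and_mul_le_sq hmK.le hx' hy').1
    _ ≤ 2 * m ^ 2 * K * δ / (2 * (m / K)) := by gcongr
    _ = m * K ^ 2 * δ := by field_simp

/-- `D^{-1/2} A D^{-1/2}`, where `D` is the diagonal matrix of row sums of `A`. -/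
noncomputable def normalizedAffinity {ι : Type*} [Fintype ι] (A : Matrix ι ι ℝ) : Matrix ι ι ℝ :=
  fun i j => A i j / (√(∑ l, A i l) * √(∑ l, A j l))

section normalizedAffinity

variable {ι : Type*} [Fintype ι] {A B : Matrix ι ι ℝ} {K δ : ℝ}

theorem card_div_le_sum_and_sum_le_card_mul {f : ι → ℝ} (hf : ∀ l, 1 / K ≤ f l ∧ f l ≤ K) :
    Fintype.card ι / K ≤ ∑ l, f l ∧ ∑ l, f l ≤ Fintype.card ι * K := by
  constructor
  · have h := card_nsmul_le_sum univ f (1 / K) fun l _ => (hf l).1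
    rwa [card_univ, nsmul_eq_mul, mul_one_div] at h
  · have h := sum_le_card_nsmul univ f K fun l _ => (hf l).2
    rwa [card_univ, nsmul_eq_mul] at h

theorem abs_sum_sub_sum_le {f g : ι → ℝ} (hfg : ∀ l, |f l - g l| ≤ δ) :
    |∑ l, f l - ∑ l, g l| ≤ Fintype.card ι * δ := by
  have h := sum_le_card_nsmul univ _ δ fun l _ => hfg l
  rw [card_univ, nsmul_eq_mul] at h
  rw [← sum_sub_distrib]
  exact (abs_sum_le_sum_abs _ _).trans h

theorem abs_normalizedAffinity_sub_le (hK : 0 < K) (hA : ∀ i j, 1 / K ≤ A i j ∧ A i j ≤ K)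
    (hB : ∀ i j, 1 / K ≤ B i j ∧ B i j ≤ K) (hAB : ∀ i j, |B i j - A i j| ≤ δ) (i j : ι) :
    |normalizedAffinity B i j - normalizedAffinity A i j| ≤
      K ^ 3 * (1 + K ^ 2) * δ / Fintype.card ι := by
  have hdA i := card_div_le_sum_and_sum_le_card_mul (hA i)
  have hdB i := card_div_le_sum_and_sum_le_card_mul (hB i)
  have hdBA i := abs_sum_sub_sum_le (hAB i)
  set m : ℝ := (Fintype.card ι : ℝ)
  have hm : 0 < m := by simpa [m] using Fintype.card_pos_iff.mpr ⟨i⟩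
  have hm0 : 0 < m / K := by positivity
  have hδ : 0 ≤ δ := (abs_nonneg _).trans (hAB i j)
  rw [normalizedAffinity, normalizedAffinity, ← Real.sqrt_mul (by linarith [hdB i]),
    ← Real.sqrt_mul (by linarith [hdA i])]
  set Q := (∑ l, A i l) * ∑ l, A j l
  set P := (∑ l, B i l) * ∑ l, B j l
  obtain ⟨hQ, hQ'⟩ := sq_le_mul_and_mul_le_sq hm0.le (hdA i) (hdA j)
  have hsQ : m / K ≤ √Q := Real.le_sqrt_of_sq_le hQ
  have hsQ' : √Q ≤ m * K := Real.sqrt_le_iff.mpr ⟨by positivity, hQ'⟩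
  have hsP : m / K ≤ √P := Real.le_sqrt_of_sq_le (sq_le_mul_and_mul_le_sq hm0.le (hdB i) (hdB j)).1
  calc |B i j / √P - A i j / √Q|
      ≤ (|B i j - A i j| * √Q + |A i j| * |√Q - √P|) / (√P * √Q) :=
        abs_div_sub_div_le (hm0.trans_le hsP) (hm0.trans_le hsQ)
    _ ≤ (δ * (m * K) + K * (m * K ^ 2 * δ)) / (m / K * (m / K)) := by
        rw [abs_of_nonneg (a := A i j) ((one_div_pos.mpr hK).le.trans (hA i j).1)]
        gcongr
        exacts [hAB i j, (hA i j).2,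
          abs_sqrt_mul_sub_sqrt_mul_le hm hK (hdA i) (hdA j) (hdB i) (hdB j) (hdBA i) (hdBA j)]
    _ = K ^ 3 * (1 + K ^ 2) * δ / m := by field_simp

end normalizedAffinity

theorem abs_sub_le_of_lipschitz_in_each_arg {E : Type*} [SeminormedAddCommGroup E]
    {k : E → E → ℝ} {L : ℝ} (h₁ : ∀ x x' y, |k x y - k x' y| ≤ L * ‖x - x'‖)
    (h₂ : ∀ x y y', |k x y - k x y'| ≤ L * ‖y - y'‖) (x x' y y' : E) :
    |k x' y' - k x y| ≤ L * (‖x' - x‖ + ‖y' - y‖) :=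
  calc |k x' y' - k x y| ≤ |k x' y' - k x y'| + |k x y' - k x y| := abs_sub_le _ _ _
    _ ≤ L * ‖x' - x‖ + L * ‖y' - y‖ := add_le_add (h₁ _ _ _) (h₂ _ _ _)
    _ = L * (‖x' - x‖ + ‖y' - y‖) := by ring

theorem normalizedAffinity_isHermitian {ι : Type*} [Fintype ι] {A : Matrix ι ι ℝ}
    (hA : A.IsHermitian) : (normalizedAffinity A).IsHermitian := by
  ext i j
  simp only [conjTranspose_apply, star_trivial, normalizedAffinity]
  rw [← hA.apply i j, star_trivial, mul_comm]

theorem lapMat_eq {n d : ℕ} (k : EuclideanSpace ℝ (Fin d) → EuclideanSpace ℝ (Fin d) → ℝ)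
    (X : Fin n → EuclideanSpace ℝ (Fin d)) :
    lapMat k X = 1 - normalizedAffinity (Matrix.of fun i j => k (X i) (X j)) := by
  ext i j
  simp [lapMat, normalizedAffinity, one_apply]

theorem lapMat_isHermitian {n d : ℕ} {k : EuclideanSpace ℝ (Fin d) → EuclideanSpace ℝ (Fin d) → ℝ}
    (hsym : ∀ x y, k x y = k y x) (X : Fin n → EuclideanSpace ℝ (Fin d)) :
    (lapMat k X).IsHermitian := by
  rw [lapMat_eq]
  exact isHermitian_one.sub (normalizedAffinity_isHermitian (IsHermitian.ext fun i j => by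
    simp [hsym]))

/-- Proposition (graphical Laplacian eigenvalue stability).  For a symmetric kernel `k`,
`L₀`-Lipschitz in each argument with `1/K ≤ k ≤ K` on the ball of radius 2, data with
`‖X_i‖ ≤ 1` and denoised data with `‖X̂_i − X_i‖ ≤ ε ≤ 1`, there is a constant `C`
depending only on `K, L₀` such that `|λ_i(L̂) − λ_i(L)| ≤ Cε` for every `i ∈ [n]`,
the eigenvalues being listed in nonincreasing order. -/
theorem laplacian_eigenvalue_stability (K L₀ : ℝ) (hK : 1 ≤ K) (hL₀ : 0 < L₀) :
    ∃ C : ℝ, 0 < C ∧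
      ∀ (n d : ℕ) (k : EuclideanSpace ℝ (Fin d) → EuclideanSpace ℝ (Fin d) → ℝ)
        (X Xh : Fin n → EuclideanSpace ℝ (Fin d)) (ε : ℝ),
        (∀ x y, k x y = k y x) →
        (∀ x x' y, |k x y - k x' y| ≤ L₀ * ‖x - x'‖) →
        (∀ x y y', |k x y - k x y'| ≤ L₀ * ‖y - y'‖) →
        (∀ x y, ‖x‖ ≤ 2 → ‖y‖ ≤ 2 → 1 / K ≤ k x y ∧ k x y ≤ K) →
        (∀ i, ‖X i‖ ≤ 1) →
        0 ≤ ε → ε ≤ 1 →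
        (∀ i, ‖Xh i - X i‖ ≤ ε) →
        ∀ i : ℕ, 1 ≤ i → i ≤ n →
          |symEig (lapMat k Xh) i - symEig (lapMat k X) i| ≤ C * ε := by
  refine ⟨2 * L₀ * (K ^ 3 * (1 + K ^ 2)), by positivity, ?_⟩
  intro n d k X Xh ε hsym hlip₁ hlip₂ hbd hX _ hε1 hXh i hi hin
  have hX2 i : ‖X i‖ ≤ 2 := by linarith [hX i]
  have hXh2 i : ‖Xh i‖ ≤ 2 := by linarith [norm_le_norm_add_norm_sub' (Xh i) (X i), hX i, hXh i]
  have hkernel i j : |k (Xh i) (Xh j) - k (X i) (X j)| ≤ 2 * L₀ * ε :=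
    calc _ ≤ L₀ * (‖Xh i - X i‖ + ‖Xh j - X j‖) :=
          abs_sub_le_of_lipschitz_in_each_arg hlip₁ hlip₂ _ _ _ _
      _ ≤ L₀ * (ε + ε) := mul_le_mul_of_nonneg_left (add_le_add (hXh i) (hXh j)) hL₀.le
      _ = 2 * L₀ * ε := by ring
  have hentry i j :
      |lapMat k Xh i j - lapMat k X i j| ≤ K ^ 3 * (1 + K ^ 2) * (2 * L₀ * ε) / n := by
    rw [lapMat_eq, lapMat_eq, Matrix.sub_apply, Matrix.sub_apply, sub_sub_sub_cancel_left,
      abs_sub_comm]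
    simpa using abs_normalizedAffinity_sub_le (A := of fun i j => k (X i) (X j))
      (B := of fun i j => k (Xh i) (Xh j)) (by linarith) (fun i j => hbd _ _ (hX2 i) (hX2 j))
      (fun i j => hbd _ _ (hXh2 i) (hXh2 j)) hkernel i j
  have hn : (0 : ℝ) < n := by exact_mod_cast hi.trans hin
  calc _ ≤ K ^ 3 * (1 + K ^ 2) * (2 * L₀ * ε) / n * n :=
        (lapMat_isHermitian hsym Xh).abs_symEig_sub_symEig_le (lapMat_isHermitian hsym X)
          hentry hi hin
    _ = _ := by field_simp
end
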